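/- arXiv:1007.3433 — 2 statements merged into one kernel-verified Lean document; each statement's English description precedes it below -/
import Mathlib

section
/- Let μ_j, ν_j be tight probability measures on a metric space X. If ∫ f dμ_j − ∫ f dν_j → 0 for every bounded uniformly continuous function f on X, then ‖μ_j − ν_j‖_d → 0 in the bounded-Lipschitz norm. -/
/-!
Suppose not. After passing to a subsequence there are `1`-Lipschitz `fₖ` with `|fₖ| ≤ 1` and
`∫ fₖ dμₖ - ∫ fₖ dνₖ ≥ ε`; it suffices to find one bounded Lipschitz `g` whose gap stays
`≥ ε / 4` for infinitely many `k`. Fix a free ultrafilter `U` on `ℕ`. The set function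
`A ↦ lim_U (μₖ + νₖ)(A)` is finitely additive, so a compact `S` whose thickening almost
maximises it leaves almost no limit mass near compacts far from `S`. Cut each `fₖ` into a part
near `S` and a part far from it; one part carries half the gap along `U`.

* Near `S`, the equi-Lipschitz `fₖ` converge along `U` uniformly on a neighbourhood of the compact
  `S`, so their limit, cut off near `S`, serves as `g`.
* Far from `S`, the gap sits, up to a small error, on the compact cores of the individually tight
  `μₖ`, `νₖ`. Choosing indices inductively so that each new core meets little mass near the
  previous cores, the cut-off far parts get disjoint supports and their sum is the required `g`
  (a gliding hump).
-/

open MeasureTheory Filter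

/-- The bounded-Lipschitz distance `‖μ − ν‖_d`. -/
noncomputable def blDist {X : Type*} [MetricSpace X] [MeasurableSpace X]
    (μ ν : Measure X) : ℝ :=
  ⨆ f : {f : X → ℝ // (∀ x, |f x| ≤ 1) ∧ LipschitzWith 1 f},
    (∫ x, f.1 x ∂μ - ∫ x, f.1 x ∂ν)

open Metric Set Topology Function
open scoped NNReal ENNReal

lemma exists_forall_ne_eq_zero_of_pairwise_disjoint_support {X ι M : Type*} [Nonempty ι]
    [Zero M] {g : ι → X → M} (hg : Pairwise (Disjoint on fun i => support (g i))) (x : X) :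
    ∃ i, ∀ j ≠ i, g j x = 0 := by
  by_cases h : ∃ i, g i x ≠ 0
  · obtain ⟨i, hi⟩ := h
    refine ⟨i, fun j hji => by_contra fun hj => ?_⟩
    exact Set.disjoint_left.mp (hg hji) (mem_support.mpr hj) hi
  · push Not at h
    exact ⟨Classical.arbitrary ι, fun j _ => h j⟩

section Lipschitz

variable {X : Type*} [PseudoMetricSpace X]

lemma LipschitzWith.mul_of_abs_le_one {f g : X → ℝ} {Kf Kg : ℝ≥0} (hf : LipschitzWith Kf f)
    (hg : LipschitzWith Kg g) (hf₁ : ∀ x, |f x| ≤ 1) (hg₁ : ∀ x, |g x| ≤ 1) :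
    LipschitzWith (Kf + Kg) fun x => f x * g x := by
  refine LipschitzWith.of_dist_le_mul fun x y => ?_
  have hfxy := hf.dist_le_mul x y
  have hgxy := hg.dist_le_mul x y
  rw [Real.dist_eq] at hfxy hgxy ⊢
  calc |f x * g x - f y * g y| = |f x * (g x - g y) + g y * (f x - f y)| := by ring_nf
    _ ≤ |f x| * |g x - g y| + |g y| * |f x - f y| := by
      rw [← abs_mul, ← abs_mul]; exact abs_add_le _ _
    _ ≤ 1 * (Kg * dist x y) + 1 * (Kf * dist x y) := by
      gcongr
      exacts [hf₁ x, hg₁ y]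
    _ = (Kf + Kg : ℝ≥0) * dist x y := by push_cast; ring

lemma LipschitzWith.const_sub {f : X → ℝ} {K : ℝ≥0} (hf : LipschitzWith K f) (c : ℝ) :
    LipschitzWith K fun x => c - f x := by
  simpa using (LipschitzWith.const c).sub hf

lemma LipschitzWith.coe_nnreal {f : X → ℝ≥0} {K : ℝ≥0} (hf : LipschitzWith K f) :
    LipschitzWith K fun x => (f x : ℝ) :=
  LipschitzWith.of_dist_le_mul fun x y => by
    simpa [NNReal.dist_eq, Real.dist_eq] using hf.dist_le_mul x y

-- For `x`, `y` in the supports of different pieces, each piece vanishes at the other point.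
lemma LipschitzWith.tsum_of_pairwise_disjoint_support {ι : Type*} [Nonempty ι] {g : ι → X → ℝ}
    {K : ℝ≥0} (hg : ∀ i, LipschitzWith K (g i))
    (hdisj : Pairwise (Disjoint on fun i => support (g i))) :
    LipschitzWith (2 * K) fun x => ∑' i, g i x := by
  refine LipschitzWith.of_dist_le_mul fun x y => ?_
  obtain ⟨i, hi⟩ := exists_forall_ne_eq_zero_of_pairwise_disjoint_support hdisj x
  obtain ⟨j, hj⟩ := exists_forall_ne_eq_zero_of_pairwise_disjoint_support hdisj y
  rw [tsum_eq_single i hi, tsum_eq_single j hj]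
  have hix := (hg i).dist_le_mul x y
  have hjx := (hg j).dist_le_mul x y
  push_cast
  rcases eq_or_ne i j with rfl | hij
  · nlinarith [dist_nonneg (x := x) (y := y), K.coe_nonneg]
  · have : dist (g i x) (g j y) ≤ dist (g i x) (g i y) + dist (g j x) (g j y) := by
      rw [hi j hij.symm, hj i hij, Real.dist_eq, Real.dist_eq, Real.dist_eq]
      simpa using abs_sub_le (g i x) 0 (g j y)
    linarith

end Lipschitz

section Integral

variable {X : Type*} [MeasurableSpace X] {μ : Measure X} {f g : X → ℝ}

lemma abs_integral_sub_integral_le [IsProbabilityMeasure μ] (hf : Integrable f μ)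
    (hg : Integrable g μ) {C : ℝ} (hfg : ∀ x, |f x - g x| ≤ C) :
    |∫ x, f x ∂μ - ∫ x, g x ∂μ| ≤ C := by
  rw [← integral_sub hf hg]
  simpa [Real.norm_eq_abs] using
    norm_integral_le_of_norm_le_const (μ := μ) (f := fun x => f x - g x) (ae_of_all _ hfg)

lemma abs_integral_sub_integral_le_of_eqOn_compl [IsFiniteMeasure μ] (hf : Integrable f μ)
    (hg : Integrable g μ) (hf₁ : ∀ x, |f x| ≤ 1) (hg₁ : ∀ x, |g x| ≤ 1) {E : Set X}
    (hfg : EqOn f g Eᶜ) : |∫ x, f x ∂μ - ∫ x, g x ∂μ| ≤ 2 * μ.real E := by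
  rw [← integral_sub hf hg,
    ← setIntegral_eq_integral_of_forall_compl_eq_zero fun x hx => sub_eq_zero.mpr (hfg hx),
    ← Real.norm_eq_abs]
  refine norm_setIntegral_le_of_norm_le_const (f := fun x => f x - g x)
    (measure_lt_top μ E) fun x _ => ?_
  rw [Real.norm_eq_abs]
  linarith [abs_sub (f x) (g x), hf₁ x, hg₁ x]

lemma Continuous.integrable_of_abs_le [TopologicalSpace X] [OpensMeasurableSpace X]
    [IsFiniteMeasure μ] (hf : Continuous f) {C : ℝ} (hC : ∀ x, |f x| ≤ C) : Integrable f μ :=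
  Integrable.of_bound hf.aestronglyMeasurable C (ae_of_all _ hC)

lemma le_integral_sub_or_le_integral_sub_of_le_add {ν : Measure X} (hfμ : Integrable f μ)
    (hgμ : Integrable g μ) (hfν : Integrable f ν) (hgν : Integrable g ν) {ε : ℝ}
    (h : ε ≤ ∫ x, f x + g x ∂μ - ∫ x, f x + g x ∂ν) :
    ε / 2 ≤ ∫ x, f x ∂μ - ∫ x, f x ∂ν ∨ ε / 2 ≤ ∫ x, g x ∂μ - ∫ x, g x ∂ν := by
  rw [integral_add hfμ hgμ, integral_add hfν hgν] at h
  by_contra! h'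
  linarith [h'.1, h'.2]

end Integral

section Ultralimit

lemma Ultrafilter.exists_tendsto_of_forall_mem_Icc {ι : Type*} (U : Ultrafilter ι) {s : ι → ℝ}
    {a b : ℝ} (hs : ∀ i, s i ∈ Icc a b) : ∃ L ∈ Icc a b, Tendsto s U (𝓝 L) := by
  obtain ⟨L, hL, hle⟩ := isCompact_Icc.ultrafilter_le_nhds (U.map s)
    (by rw [Ultrafilter.coe_map, le_principal_iff, Filter.mem_map]; exact univ_mem' hs)
  exact ⟨L, hL, by rwa [Tendsto, ← Ultrafilter.coe_map]⟩

variable {X ι : Type*} [PseudoMetricSpace X]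

lemma exists_lipschitzWith_tendsto_ultrafilter (U : Ultrafilter ι) {f : ι → X → ℝ} {K : ℝ≥0}
    (hf : ∀ i, LipschitzWith K (f i)) (hf₁ : ∀ i x, |f i x| ≤ 1) :
    ∃ v : X → ℝ, LipschitzWith K v ∧ (∀ x, |v x| ≤ 1) ∧
      ∀ x, Tendsto (fun i => f i x) U (𝓝 (v x)) := by
  choose v hv₁ hv using fun x => U.exists_tendsto_of_forall_mem_Icc fun i => abs_le.mp (hf₁ i x)
  refine ⟨v, LipschitzWith.of_dist_le_mul fun x y => ?_, fun x => abs_le.mpr (hv₁ x), hv⟩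
  exact le_of_tendsto ((hv x).dist (hv y)) (Eventually.of_forall fun i => (hf i).dist_le_mul x y)

lemma eventually_forall_mem_thickening_abs_sub_le {L : Filter ι} {f : ι → X → ℝ} {v : X → ℝ}
    (hf : ∀ i, LipschitzWith 1 (f i)) (hv : LipschitzWith 1 v)
    (hlim : ∀ x, Tendsto (fun i => f i x) L (𝓝 (v x))) {S : Set X} (hS : IsCompact S) {r : ℝ}
    (hr : 0 < r) : ∀ᶠ i in L, ∀ x ∈ thickening r S, |f i x - v x| ≤ 4 * r := by
  obtain ⟨t, htS, ht, hcover⟩ := finite_cover_balls_of_compact hS (half_pos hr)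
  have hnet : ∀ᶠ i in L, ∀ w ∈ t, |f i w - v w| < r := by
    refine ht.eventually_all.mpr fun w _ => ?_
    simpa [Real.dist_eq] using (hlim w).eventually (Metric.ball_mem_nhds _ hr)
  filter_upwards [hnet] with i hi x hx
  obtain ⟨s, hs, hxs⟩ := mem_thickening_iff.mp hx
  obtain ⟨w, hw, hsw⟩ := mem_iUnion₂.mp (hcover hs)
  have hxw : dist x w < 3 / 2 * r := by linarith [dist_triangle x s w, mem_ball.mp hsw]
  have hfi := (hf i).dist_le_mul x w
  have hvw := hv.dist_le_mul x w
  simp only [NNReal.coe_one, one_mul, Real.dist_eq] at hfi hvw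
  calc |f i x - v x| = |(f i x - f i w) + (f i w - v w) + (v w - v x)| := by ring_nf
    _ ≤ |f i x - f i w| + |f i w - v w| + |v w - v x| := abs_add_three _ _ _
    _ ≤ 4 * r := by linarith [hi w hw, abs_sub_comm (v w) (v x)]

end Ultralimit

lemma disjoint_thickening_of_disjoint_thickening_add {X : Type*} [PseudoMetricSpace X]
    {G S : Set X} {δ δ' : ℝ} (h : Disjoint G (thickening (δ + δ') S)) :
    Disjoint (thickening δ G) (thickening δ' S) := by
  refine Set.disjoint_left.mpr fun x hxG hxS => ?_
  obtain ⟨y, hyG, hxy⟩ := mem_thickening_iff.mp hxG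
  exact Set.disjoint_left.mp h hyG <| thickening_thickening_subset δ δ' S <|
    mem_thickening_iff.mpr ⟨x, hxS, by rwa [dist_comm]⟩

section ThickenedIndicator

variable {X : Type*} [PseudoEMetricSpace X] {δ : ℝ} (hδ : 0 < δ) (E : Set X) (x : X)

lemma abs_coe_thickenedIndicator_le_one : |(thickenedIndicator hδ E x : ℝ)| ≤ 1 := by
  rw [NNReal.abs_eq]; exact_mod_cast thickenedIndicator_le_one hδ E x

lemma abs_one_sub_coe_thickenedIndicator_le_one :
    |1 - (thickenedIndicator hδ E x : ℝ)| ≤ 1 := by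
  have h₀ := (thickenedIndicator hδ E x).coe_nonneg
  have h₁ : (thickenedIndicator hδ E x : ℝ) ≤ 1 := by
    exact_mod_cast thickenedIndicator_le_one hδ E x
  exact abs_le.mpr ⟨by linarith, by linarith⟩

variable {E x}

lemma coe_thickenedIndicator_eq_one (hx : x ∈ E) : (thickenedIndicator hδ E x : ℝ) = 1 := by
  simp only [thickenedIndicator_one hδ E hx, NNReal.coe_one]

lemma mem_thickening_of_coe_thickenedIndicator_ne_zero
    (hx : (thickenedIndicator hδ E x : ℝ) ≠ 0) : x ∈ thickening δ E :=
  by_contra fun h => hx (by simp only [thickenedIndicator_zero hδ E h, NNReal.coe_zero])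

end ThickenedIndicator

lemma exists_lipschitzWith_cutoff_thickening {X : Type*} [PseudoMetricSpace X] (S : Set X)
    {ρ : ℝ} (hρ : 0 < ρ) :
    ∃ χ : X → ℝ, LipschitzWith ρ.toNNReal⁻¹ χ ∧ (∀ x, |χ x| ≤ 1) ∧ (∀ x, |1 - χ x| ≤ 1) ∧
      (∀ x ∈ thickening ρ S, χ x = 1) ∧ ∀ x, χ x ≠ 0 → x ∈ thickening (2 * ρ) S := by
  refine ⟨fun x => thickenedIndicator hρ (thickening ρ S) x,
    (lipschitzWith_thickenedIndicator hρ _).coe_nnreal, abs_coe_thickenedIndicator_le_one hρ _,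
    abs_one_sub_coe_thickenedIndicator_le_one hρ _,
    fun x hx => coe_thickenedIndicator_eq_one hρ hx, fun x hx => ?_⟩
  rw [two_mul]
  exact thickening_thickening_subset _ _ S (mem_thickening_of_coe_thickenedIndicator_ne_zero hρ hx)

section MassExhaustion

variable {X ι : Type*} [PseudoMetricSpace X] [MeasurableSpace X] [OpensMeasurableSpace X]

lemma exists_isCompact_eventually_measureReal_thickening_lt (U : Ultrafilter ι)
    (Θ : ι → Measure X) [∀ i, IsFiniteMeasure (Θ i)] {C : ℝ} (hC : ∀ i, (Θ i).real univ ≤ C)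
    {δ : ℝ} (hδ : 0 < δ) :
    ∃ S, IsCompact S ∧ ∀ G, IsCompact G →
      Disjoint (thickening δ G) (thickening δ S) →
      ∀ᶠ i in U, (Θ i).real (thickening δ G) < δ := by
  choose lim hlim_mem hlim using fun A : Set X => U.exists_tendsto_of_forall_mem_Icc
    (s := fun i => (Θ i).real A) fun i =>
      ⟨measureReal_nonneg, (measureReal_mono (subset_univ A)).trans (hC i)⟩
  have lim_mono : ∀ {A B}, A ⊆ B → lim A ≤ lim B := fun hAB =>
    le_of_tendsto_of_tendsto' (hlim _) (hlim _) fun i => measureReal_mono hAB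
  have lim_union : ∀ {A B}, Disjoint A B → MeasurableSet B → lim (A ∪ B) = lim A + lim B :=
    fun hAB hB => tendsto_nhds_unique (hlim _) <|
      ((hlim _).add (hlim _)).congr fun i => (measureReal_union (μ := Θ i) hAB hB).symm
  set V := (fun S => lim (thickening δ S)) '' {S | IsCompact S}
  have hV_bdd : BddAbove V := ⟨C, by rintro _ ⟨S, -, rfl⟩; exact (hlim_mem _).2⟩
  have hV_ne : V.Nonempty := ⟨_, ∅, isCompact_empty, rfl⟩
  obtain ⟨_, ⟨S, hS, rfl⟩, hS_max⟩ := exists_lt_of_lt_csSup hV_ne (sub_lt_self _ hδ)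
  refine ⟨S, hS, fun G hG hGS => ?_⟩
  have hSG : lim (thickening δ (S ∪ G)) ≤ sSup V := le_csSup hV_bdd ⟨S ∪ G, hS.union hG, rfl⟩
  rw [thickening_union, lim_union hGS.symm isOpen_thickening.measurableSet] at hSG
  exact (hlim _).eventually (gt_mem_nhds (by linarith))

end MassExhaustion

lemma exists_strictMono_monotone_of_frequently {α : Type*} (F : ℕ → Set α) (P : Set α → Prop)
    (hF : ∀ k, P (F k)) (hP : ∀ G k, P G → P (G ∪ F k)) (Q : ℕ → Set α → Prop)
    (hQ : ∀ G, P G → ∃ᶠ k in atTop, Q k G) :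
    ∃ (k : ℕ → ℕ) (G : ℕ → Set α), StrictMono k ∧ Monotone G ∧ (∀ l, F (k l) ⊆ G l) ∧
      ∀ l, Q (k (l + 1)) (G l) := by
  have hnext : ∀ n G, P G → ∃ k, n < k ∧ Q k G := fun n G hG =>
    ((hQ G hG).and_eventually (eventually_gt_atTop n)).exists.imp fun _ h => ⟨h.2, h.1⟩
  choose! next hnext_gt hnext_Q using hnext
  let seq : ℕ → ℕ × Set α := fun l =>
    Nat.rec (0, F 0) (fun _ p => (next p.1 p.2, p.2 ∪ F (next p.1 p.2))) l
  have hP_seq : ∀ l, P (seq l).2 := by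
    intro l
    induction l with
    | zero => exact hF 0
    | succ l ih => exact hP _ _ ih
  refine ⟨fun l => (seq l).1, fun l => (seq l).2,
    strictMono_nat_of_lt_succ fun l => hnext_gt _ _ (hP_seq l),
    monotone_nat_of_le_succ fun l => subset_union_left, fun l => ?_,
    fun l => hnext_Q _ _ (hP_seq l)⟩
  cases l with
  | zero => exact subset_rfl
  | succ l => exact subset_union_right

section GlidingHump

variable {X : Type*} [PseudoMetricSpace X] {r : ℝ} (hr : 0 < r)

noncomputable def humpPiece (b : X → ℝ) (F G : Set X) (x : X) : ℝ :=
  b x * thickenedIndicator hr F x * (1 - thickenedIndicator hr (thickening r G) x)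

variable {b : X → ℝ} {F G : Set X} {x : X}

lemma humpPiece_ne_zero (h : humpPiece hr b F G x ≠ 0) :
    b x ≠ 0 ∧ x ∈ thickening r F ∧ x ∉ thickening r G := by
  simp only [humpPiece, ne_eq, mul_eq_zero, not_or, sub_eq_zero] at h
  obtain ⟨⟨hb, hF⟩, hG⟩ := h
  exact ⟨hb, mem_thickening_of_coe_thickenedIndicator_ne_zero hr hF,
    fun hx => hG (coe_thickenedIndicator_eq_one hr hx).symm⟩

lemma humpPiece_eq (hF : b x ≠ 0 → x ∈ F) (hG : x ∉ thickening (2 * r) G) :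
    humpPiece hr b F G x = b x := by
  by_cases hb : b x = 0
  · simp [humpPiece, hb]
  have hG' : x ∉ thickening r (thickening r G) := fun hx =>
    hG (by simpa [two_mul] using thickening_thickening_subset r r G hx)
  simp [humpPiece, thickenedIndicator_one hr F (hF hb), thickenedIndicator_zero hr _ hG']

lemma abs_humpPiece_le (hb : ∀ x, |b x| ≤ 1) (x : X) : |humpPiece hr b F G x| ≤ 1 := by
  rw [humpPiece, abs_mul, abs_mul]
  exact mul_le_one₀ (mul_le_one₀ (hb x) (abs_nonneg _)
    (abs_coe_thickenedIndicator_le_one hr F x)) (abs_nonneg _)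
    (abs_one_sub_coe_thickenedIndicator_le_one hr _ x)

lemma lipschitzWith_humpPiece {K : ℝ≥0} (hb : LipschitzWith K b) (hb₁ : ∀ x, |b x| ≤ 1) :
    LipschitzWith (K + r.toNNReal⁻¹ + r.toNNReal⁻¹) (humpPiece hr b F G) := by
  have hbF₁ : ∀ y, |b y * thickenedIndicator hr F y| ≤ 1 := fun y => by
    rw [abs_mul]
    exact mul_le_one₀ (hb₁ y) (abs_nonneg _) (abs_coe_thickenedIndicator_le_one hr F y)
  exact (hb.mul_of_abs_le_one (lipschitzWith_thickenedIndicator hr F).coe_nnreal hb₁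
    (abs_coe_thickenedIndicator_le_one hr F)).mul_of_abs_le_one
    ((lipschitzWith_thickenedIndicator hr _).coe_nnreal.const_sub 1) hbF₁
    (abs_one_sub_coe_thickenedIndicator_le_one hr _)

variable {b : ℕ → X → ℝ} {F G : ℕ → Set X}

lemma pairwise_disjoint_support_humpPiece (hG : Monotone G) (hFG : ∀ l, F l ⊆ G (l + 1)) :
    Pairwise (Disjoint on fun l => support (humpPiece hr (b l) (F l) (G l))) := by
  refine (pairwise_disjoint_on _).mpr fun l l' hll' => Set.disjoint_left.mpr fun x hx hx' => ?_
  exact (humpPiece_ne_zero hr hx').2.2 <| thickening_subset_of_subset r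
    ((hFG l).trans (hG (Nat.succ_le_of_lt hll'))) (humpPiece_ne_zero hr hx).2.1

lemma tsum_humpPiece_eq (hG : Monotone G) (hFG : ∀ l, F l ⊆ G (l + 1)) {l : ℕ} {x : X}
    (hxG : x ∉ thickening (2 * r) (G l)) (hxF : ∀ l', b l' x ≠ 0 → x ∈ F l) :
    ∑' l', humpPiece hr (b l') (F l') (G l') x = b l x := by
  rw [tsum_eq_single l fun l' hl' => ?_, humpPiece_eq hr (hxF l) hxG]
  by_contra h
  obtain ⟨hb, hxF', hxG'⟩ := humpPiece_ne_zero hr h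
  rcases hl'.lt_or_gt with hlt | hgt
  · exact hxG <| thickening_mono (by linarith) _ <|
      thickening_subset_of_subset r ((hFG l').trans (hG hlt)) hxF'
  · exact hxG' <| self_subset_thickening hr _ <| hG hgt <| hFG l (hxF l' hb)

end GlidingHump

lemma exists_lipschitzWith_glued_humps {X : Type*} [PseudoMetricSpace X] {r : ℝ} (hr : 0 < r)
    {b : ℕ → X → ℝ} {F G : ℕ → Set X} {K : ℝ≥0} (hb : ∀ l, LipschitzWith K (b l))
    (hb₁ : ∀ l x, |b l x| ≤ 1) (hG : Monotone G) (hFG : ∀ l, F l ⊆ G (l + 1)) :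
    ∃ g : X → ℝ, (∃ L, LipschitzWith L g) ∧ (∀ x, |g x| ≤ 1) ∧
      ∀ l x, x ∉ thickening (2 * r) (G l) → (∀ l', b l' x ≠ 0 → x ∈ F l) → g x = b l x := by
  have hdisj := pairwise_disjoint_support_humpPiece (b := b) hr hG hFG
  refine ⟨fun x => ∑' l, humpPiece hr (b l) (F l) (G l) x,
    ⟨_, LipschitzWith.tsum_of_pairwise_disjoint_support
      (fun l => lipschitzWith_humpPiece hr (hb l) (hb₁ l)) hdisj⟩, fun x => ?_,
    fun l x hxG hxF => tsum_humpPiece_eq hr hG hFG hxG hxF⟩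
  obtain ⟨l, hl⟩ := exists_forall_ne_eq_zero_of_pairwise_disjoint_support hdisj x
  simpa only [tsum_eq_single l hl] using abs_humpPiece_le hr (hb₁ l) x

lemma MeasureTheory.IsTightMeasureSet.exists_isCompact_measureReal_compl_le {X : Type*}
    [TopologicalSpace X] [MeasurableSpace X] {S : Set (Measure X)}
    (hS : IsTightMeasureSet S) {δ : ℝ} (hδ : 0 < δ) :
    ∃ C, IsCompact C ∧ ∀ μ ∈ S, μ.real Cᶜ ≤ δ := by
  obtain ⟨C, hC, hCμ⟩ := isTightMeasureSet_iff_exists_isCompact_measure_compl_le.mp hS _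
    (ENNReal.ofReal_pos.mpr hδ)
  exact ⟨C, hC, fun μ hμ => ENNReal.toReal_le_of_le_ofReal hδ.le (hCμ μ hμ)⟩

section FarGap

variable {X : Type*} [PseudoMetricSpace X] [MeasurableSpace X] [OpensMeasurableSpace X]

lemma exists_lipschitzWith_frequently_gap_of_far_gap {M N : ℕ → Measure X}
    [∀ k, IsFiniteMeasure (M k)] [∀ k, IsFiniteMeasure (N k)]
    (htight : ∀ k, IsTightMeasureSet {M k, N k}) {b : ℕ → X → ℝ} {K : ℝ≥0}
    (hb : ∀ k, LipschitzWith K (b k)) (hb₁ : ∀ k x, |b k x| ≤ 1) {O : Set X} (hO : IsOpen O)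
    (hbO : ∀ k, ∀ x ∈ O, b k x = 0) {c δ : ℝ} (hδ : 0 < δ)
    (hfar : ∀ G, IsCompact G → Disjoint G O → ∃ᶠ k in atTop,
      c ≤ ∫ x, b k x ∂M k - ∫ x, b k x ∂N k ∧
        (M k).real (thickening δ G) ≤ δ ∧ (N k).real (thickening δ G) ≤ δ) :
    ∃ g : X → ℝ, (∃ L, LipschitzWith L g) ∧ (∀ x, |g x| ≤ 1) ∧
      ∃ᶠ k in atTop, c - 8 * δ ≤ ∫ x, g x ∂M k - ∫ x, g x ∂N k := by
  choose C hC hCμ using fun k => (htight k).exists_isCompact_measureReal_compl_le hδ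
  obtain ⟨k, G, hk, hG, hCG, hQ⟩ := exists_strictMono_monotone_of_frequently (fun k => C k \ O)
    (fun G => IsCompact G ∧ Disjoint G O) (fun k => ⟨(hC k).diff hO, disjoint_sdiff_left⟩)
    (fun G k hG => ⟨hG.1.union ((hC k).diff hO), hG.2.union_left disjoint_sdiff_left⟩) _
    fun G hG => hfar G hG.1 hG.2
  obtain ⟨g, ⟨L, hg⟩, hg₁, hg_eq⟩ := exists_lipschitzWith_glued_humps (half_pos hδ)
    (b := fun l => b (k (l + 1))) (fun l => hb _) (fun l => hb₁ _) hG fun l => hCG (l + 1)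
  refine ⟨g, ⟨L, hg⟩, hg₁, (hk.tendsto_atTop.comp (tendsto_add_atTop_nat 1)).frequently
    (Frequently.of_forall fun l => ?_)⟩
  obtain ⟨hgap, hM, hN⟩ := hQ l
  have heq : EqOn (b (k (l + 1))) g ((C (k (l + 1)))ᶜ ∪ thickening δ (G l))ᶜ := fun x hx => by
    simp only [compl_union, compl_compl, mem_inter_iff, mem_compl_iff] at hx
    refine (hg_eq l x (by rw [mul_div_cancel₀ _ two_ne_zero]; exact hx.2)
      fun l' hl' => ⟨hx.1, fun hxO => hl' (hbO _ x hxO)⟩).symm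
  have hbound : ∀ μ : Measure X, [IsFiniteMeasure μ] → μ.real (C (k (l + 1)))ᶜ ≤ δ →
      μ.real (thickening δ (G l)) ≤ δ →
      |∫ x, b (k (l + 1)) x ∂μ - ∫ x, g x ∂μ| ≤ 4 * δ := fun μ _ hC hG => by
    refine (abs_integral_sub_integral_le_of_eqOn_compl ((hb _).continuous.integrable_of_abs_le
      (hb₁ _)) (hg.continuous.integrable_of_abs_le hg₁) (hb₁ _) hg₁ heq).trans ?_
    linarith [measureReal_union_le (μ := μ) (C (k (l + 1)))ᶜ (thickening δ (G l))]
  have hMb := abs_le.mp (hbound (M _) (hCμ _ _ (by simp)) hM)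
  have hNb := abs_le.mp (hbound (N _) (hCμ _ _ (by simp)) hN)
  simp only [Function.comp_apply]
  linarith [hMb.1, hNb.2]

end FarGap

section NearGap

variable {X ι : Type*} [PseudoMetricSpace X] [MeasurableSpace X] [OpensMeasurableSpace X]

lemma exists_lipschitzWith_eventually_gap_of_near_gap (U : Ultrafilter ι) {M N : ι → Measure X}
    [∀ i, IsProbabilityMeasure (M i)] [∀ i, IsProbabilityMeasure (N i)] {f : ι → X → ℝ}
    (hf : ∀ i, LipschitzWith 1 (f i)) (hf₁ : ∀ i x, |f i x| ≤ 1) {χ : X → ℝ} {Kχ : ℝ≥0}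
    (hχ : LipschitzWith Kχ χ) (hχ₁ : ∀ x, |χ x| ≤ 1) {S : Set X} (hS : IsCompact S) {r : ℝ}
    (hr : 0 < r) (hχS : ∀ x, χ x ≠ 0 → x ∈ thickening r S) {c : ℝ}
    (hgap : ∀ᶠ i in U, c ≤ ∫ x, f i x * χ x ∂M i - ∫ x, f i x * χ x ∂N i) :
    ∃ g : X → ℝ, (∃ L, LipschitzWith L g) ∧ (∀ x, |g x| ≤ 1) ∧
      ∀ᶠ i in U, c - 8 * r ≤ ∫ x, g x ∂M i - ∫ x, g x ∂N i := by
  obtain ⟨v, hv, hv₁, hlim⟩ := exists_lipschitzWith_tendsto_ultrafilter U hf hf₁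
  have hprod₁ : ∀ {h : X → ℝ}, (∀ x, |h x| ≤ 1) → ∀ x, |h x * χ x| ≤ 1 := fun hh x => by
    rw [abs_mul]; exact mul_le_one₀ (hh x) (abs_nonneg _) (hχ₁ x)
  refine ⟨fun x => v x * χ x, ⟨_, hv.mul_of_abs_le_one hχ hv₁ hχ₁⟩, hprod₁ hv₁, ?_⟩
  filter_upwards [hgap, eventually_forall_mem_thickening_abs_sub_le hf hv hlim hS hr]
    with i hi hfv
  have hclose : ∀ x, |f i x * χ x - v x * χ x| ≤ 4 * r := fun x => by
    by_cases hx : χ x = 0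
    · simp only [hx, mul_zero, sub_zero, abs_zero]; positivity
    rw [← sub_mul, abs_mul]
    simpa using mul_le_mul (hfv x (hχS x hx)) (hχ₁ x) (abs_nonneg _) (by positivity)
  have hbound : ∀ μ : Measure X, [IsProbabilityMeasure μ] →
      |∫ x, f i x * χ x ∂μ - ∫ x, v x * χ x ∂μ| ≤ 4 * r := fun μ _ =>
    abs_integral_sub_integral_le (((hf i).continuous.mul hχ.continuous).integrable_of_abs_le
      (hprod₁ (hf₁ i))) ((hv.continuous.mul hχ.continuous).integrable_of_abs_le (hprod₁ hv₁))
      hclose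
  linarith [(abs_le.mp (hbound (M i))).2, (abs_le.mp (hbound (N i))).1]

end NearGap

section UniformGap

variable {X : Type*} [PseudoMetricSpace X] [MeasurableSpace X] [OpensMeasurableSpace X]

lemma exists_lipschitzWith_frequently_gap_of_forall_gap {M N : ℕ → Measure X}
    [∀ k, IsProbabilityMeasure (M k)] [∀ k, IsProbabilityMeasure (N k)]
    (htight : ∀ k, IsTightMeasureSet {M k, N k}) {f : ℕ → X → ℝ}
    (hf : ∀ k, LipschitzWith 1 (f k)) (hf₁ : ∀ k x, |f k x| ≤ 1) {ε : ℝ} (hε : 0 < ε)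
    (hgap : ∀ k, ε ≤ ∫ x, f k x ∂M k - ∫ x, f k x ∂N k) :
    ∃ g : X → ℝ, (∃ L, LipschitzWith L g) ∧ (∀ x, |g x| ≤ 1) ∧
      ∃ᶠ k in atTop, ε / 4 ≤ ∫ x, g x ∂M k - ∫ x, g x ∂N k := by
  set U := hyperfilter ℕ
  set δ := ε / 128 with hδ_def
  have hδ : 0 < δ := by positivity
  obtain ⟨S, hS, hS_far⟩ := exists_isCompact_eventually_measureReal_thickening_lt U
    (fun k => M k + N k) (C := 2) (fun k => by simp [measureReal_add_apply]; norm_num) hδ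
  obtain ⟨χ, hχ, hχ₁, hχ₁', hχ_one, hχ_near⟩ :=
    exists_lipschitzWith_cutoff_thickening S (by positivity : 0 < 2 * δ)
  have hfχ₁ : ∀ k x, |f k x * χ x| ≤ 1 := fun k x => by
    rw [abs_mul]; exact mul_le_one₀ (hf₁ k x) (abs_nonneg _) (hχ₁ x)
  have hfχ₁' : ∀ k x, |f k x * (1 - χ x)| ≤ 1 := fun k x => by
    rw [abs_mul]
    exact mul_le_one₀ (hf₁ k x) (abs_nonneg _) (hχ₁' x)
  have hfχ : ∀ k, LipschitzWith _ fun x => f k x * (1 - χ x) := fun k =>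
    (hf k).mul_of_abs_le_one (hχ.const_sub 1) (hf₁ k) hχ₁'
  have hint : ∀ k (μ : Measure X) [IsFiniteMeasure μ], Integrable (fun x => f k x * χ x) μ ∧
      Integrable (fun x => f k x * (1 - χ x)) μ := fun k μ _ =>
    ⟨((hf k).continuous.mul hχ.continuous).integrable_of_abs_le (hfχ₁ k),
      (hfχ k).continuous.integrable_of_abs_le (hfχ₁' k)⟩
  have hsplit := fun k => le_integral_sub_or_le_integral_sub_of_le_add (hint k (M k)).1
    (hint k (M k)).2 (hint k (N k)).1 (hint k (N k)).2
    (by simpa only [← mul_add, add_sub_cancel, mul_one] using hgap k)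
  rcases Ultrafilter.eventually_or.mp (Eventually.of_forall hsplit) with hnear | hfar
  · obtain ⟨g, hg, hg₁, hg_gap⟩ := exists_lipschitzWith_eventually_gap_of_near_gap U hf hf₁ hχ
      hχ₁ hS (r := 4 * δ) (by positivity)
      (fun x hx => by convert hχ_near x hx using 2; ring) hnear
    refine ⟨g, hg, hg₁, (hg_gap.frequently.filter_mono Nat.hyperfilter_le_atTop).mono
      fun k hk => by linarith [hδ_def]⟩
  · have hthick : ∀ G, Disjoint G (thickening (2 * δ) S) → Disjoint (thickening δ G)
        (thickening δ S) := fun G hG => disjoint_thickening_of_disjoint_thickening_add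
      (by rwa [← two_mul])
    obtain ⟨g, hg, hg₁, hg_gap⟩ := exists_lipschitzWith_frequently_gap_of_far_gap htight hfχ
      hfχ₁' isOpen_thickening (fun k x hx => by rw [hχ_one x hx, sub_self, mul_zero]) hδ
      fun G hG hGS => ((hfar.and (hS_far G hG (hthick G hGS))).frequently.filter_mono
        Nat.hyperfilter_le_atTop).mono fun k ⟨hk, hmass⟩ => by
          rw [measureReal_add_apply] at hmass
          exact ⟨hk, by linarith [measureReal_nonneg (μ := N k) (s := thickening δ G)],
            by linarith [measureReal_nonneg (μ := M k) (s := thickening δ G)]⟩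
    exact ⟨g, hg, hg₁, hg_gap.mono fun k hk => by linarith [hδ_def]⟩

end UniformGap

section BoundedLipschitz

variable {X : Type*} [MetricSpace X] [MeasurableSpace X]

lemma blDist_nonneg (μ ν : Measure X) : 0 ≤ blDist μ ν := by
  by_cases h : BddAbove (range fun f : {f : X → ℝ // (∀ x, |f x| ≤ 1) ∧ LipschitzWith 1 f} =>
      ∫ x, f.1 x ∂μ - ∫ x, f.1 x ∂ν)
  · exact le_ciSup_of_le h ⟨0, by simp, (LipschitzWith.const 0).weaken zero_le_one⟩ (by simp)
  · rw [blDist, Real.iSup_of_not_bddAbove h]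

lemma exists_gap_of_lt_blDist {μ ν : Measure X} {c : ℝ} (h : c < blDist μ ν) :
    ∃ f : X → ℝ, (∀ x, |f x| ≤ 1) ∧ LipschitzWith 1 f ∧
      c < ∫ x, f x ∂μ - ∫ x, f x ∂ν := by
  have : Nonempty {f : X → ℝ // (∀ x, |f x| ≤ 1) ∧ LipschitzWith 1 f} :=
    ⟨⟨0, by simp, (LipschitzWith.const 0).weaken zero_le_one⟩⟩
  obtain ⟨f, hf⟩ := exists_lt_of_lt_ciSup h
  exact ⟨f.1, f.2.1, f.2.2, hf⟩

end BoundedLipschitz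

/-- if `μ_j`, `ν_j` are tight probability measures and
`∫ f dμ_j − ∫ f dν_j → 0` for every bounded uniformly continuous `f`, then
`‖μ_j − ν_j‖_d → 0`. -/
theorem blDist_tendsto_zero_of_ubWeak
    {X : Type*} [MetricSpace X] [MeasurableSpace X] [BorelSpace X]
    (μ ν : ℕ → Measure X)
    (hμp : ∀ j, IsProbabilityMeasure (μ j)) (hνp : ∀ j, IsProbabilityMeasure (ν j))
    (hμt : ∀ j, (μ j).InnerRegular) (hνt : ∀ j, (ν j).InnerRegular)
    (hweak : ∀ f : X → ℝ, UniformContinuous f → (∃ M, ∀ x, |f x| ≤ M) →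
      Tendsto (fun j => (∫ x, f x ∂μ j) - ∫ x, f x ∂ν j) atTop (nhds 0)) :
    Tendsto (fun j => blDist (μ j) (ν j)) atTop (nhds 0) := by
  have htight : ∀ j, IsTightMeasureSet {μ j, ν j} := fun j => by
    rw [insert_eq]
    exact (isTightMeasureSet_singleton_of_innerRegular (h := hμt j)).union
      (isTightMeasureSet_singleton_of_innerRegular (h := hνt j))
  refine tendsto_order.2 ⟨fun a ha => Eventually.of_forall fun j =>
    ha.trans_le (blDist_nonneg _ _), fun a ha => by_contra fun h => ?_⟩
  obtain ⟨φ, hφ, hφa⟩ := extraction_of_frequently_atTop (not_eventually.mp h)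
  choose f hf₁ hf hgap using fun k =>
    exists_gap_of_lt_blDist (μ := μ (φ k)) (ν := ν (φ k)) (c := a / 2)
      (by linarith [not_lt.mp (hφa k)])
  obtain ⟨g, ⟨L, hg⟩, hg₁, hg_gap⟩ := exists_lipschitzWith_frequently_gap_of_forall_gap
    (M := fun k => μ (φ k)) (N := fun k => ν (φ k)) (fun k => htight _) hf hf₁ (half_pos ha)
    fun k => (hgap k).le
  have hg_lim := ((hweak g hg.uniformContinuous ⟨1, hg₁⟩).comp hφ.tendsto_atTop).eventually
    (gt_mem_nhds (by positivity : (0 : ℝ) < a / 2 / 4))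
  obtain ⟨k, hk, hk'⟩ := (hg_gap.and_eventually hg_lim).exists
  exact lt_irrefl _ (hk.trans_lt hk')
end

section
/- Let X be a metric space. On the set of tight probability measures on X, the uniformity induced by the bounded-Lipschitz norm is finer than the Ub(X)-weak uniformity: for every bounded uniformly continuous f on X, the map μ ↦ ∫ f dμ is uniformly continuous with respect to the bounded-Lipschitz metric. -/
/-!
Approximate `f` uniformly within `ε / 3` by its Pasch–Hausdorff envelope
`g x = ⨅ y, f y + K * dist x y`, which for large `K` is `K`-Lipschitz and bounded by the bound
of `f`. Some multiple `C⁻¹ • g` is then admissible in the supremum defining `blDist`, so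
`|∫ f dμ - ∫ f dν| ≤ 2 ε / 3 + C * blDist μ ν`.
-/

open MeasureTheory

open Set
open scoped NNReal

section InfConvolution

variable {X : Type*} [PseudoMetricSpace X] {f : X → ℝ} {K : ℝ≥0} {m M ε : ℝ}

/-- The Pasch–Hausdorff envelope of `f`: the largest `K`-Lipschitz function below `f`. -/
noncomputable def infConvDist (f : X → ℝ) (K : ℝ≥0) (x : X) : ℝ :=
  ⨅ y, f y + K * dist x y

lemma bddBelow_range_add_mul_dist (hf : ∀ y, m ≤ f y) (x : X) :
    BddBelow (range fun y => f y + K * dist x y) :=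
  ⟨m, forall_mem_range.2 fun y => le_add_of_le_of_nonneg (hf y) (by positivity)⟩

lemma infConvDist_le (hf : ∀ y, m ≤ f y) (x : X) : infConvDist f K x ≤ f x := by
  simpa [infConvDist] using ciInf_le (bddBelow_range_add_mul_dist (K := K) hf x) x

lemma le_infConvDist (hf : ∀ y, m ≤ f y) (x : X) : m ≤ infConvDist f K x :=
  have : Nonempty X := ⟨x⟩
  le_ciInf fun y => le_add_of_le_of_nonneg (hf y) (by positivity)

lemma lipschitzWith_infConvDist (hf : ∀ y, m ≤ f y) : LipschitzWith K (infConvDist f K) := by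
  refine LipschitzWith.of_le_add_mul K fun x x' => ?_
  have : Nonempty X := ⟨x⟩
  rw [← sub_le_iff_le_add]
  refine le_ciInf fun y => sub_le_iff_le_add.2 ?_
  calc infConvDist f K x ≤ f y + K * dist x y := ciInf_le (bddBelow_range_add_mul_dist hf x) y
    _ ≤ f y + K * dist x' y + K * dist x x' := by
      have := dist_triangle x x' y
      have := K.2
      nlinarith

/-- Far from `x` the penalty `K * dist` exceeds the oscillation `2 * M` of `f`; near `x`,
uniform continuity keeps `f` above `f x - ε`. -/
lemma sub_le_infConvDist (hf_uc : UniformContinuous f) (hf_bd : ∀ x, |f x| ≤ M) (hε : 0 < ε) :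
    ∃ K : ℝ≥0, ∀ x, f x - ε ≤ infConvDist f K x := by
  obtain ⟨δ, hδ, hδf⟩ := Metric.uniformContinuous_iff.1 hf_uc ε hε
  refine ⟨(2 * M / δ).toNNReal, fun x => ?_⟩
  have : Nonempty X := ⟨x⟩
  refine le_ciInf fun y => ?_
  have hK : 2 * M / δ ≤ (2 * M / δ).toNNReal := Real.le_coe_toNNReal _
  have hKnn : (0 : ℝ) ≤ (2 * M / δ).toNNReal := by positivity
  rcases lt_or_ge (dist x y) δ with hxy | hxy
  · have := (abs_lt.1 (hδf hxy)).2
    nlinarith [dist_nonneg (x := x) (y := y)]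
  · have hfar : 2 * M ≤ (2 * M / δ).toNNReal * dist x y :=
      calc 2 * M = 2 * M / δ * δ := by field_simp
        _ ≤ _ := mul_le_mul hK hxy hδ.le hKnn
    linarith [(abs_le.1 (hf_bd x)).2, (abs_le.1 (hf_bd y)).1]

lemma exists_lipschitzWith_abs_sub_le (hf_uc : UniformContinuous f) (hf_bd : ∀ x, |f x| ≤ M)
    (hε : 0 < ε) :
    ∃ K : ℝ≥0, ∃ g : X → ℝ, LipschitzWith K g ∧ (∀ x, |g x| ≤ M) ∧ ∀ x, |f x - g x| ≤ ε := by
  obtain ⟨K, hK⟩ := sub_le_infConvDist hf_uc hf_bd hε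
  have hf_ge : ∀ y, -M ≤ f y := fun y => (abs_le.1 (hf_bd y)).1
  refine ⟨K, infConvDist f K, lipschitzWith_infConvDist hf_ge, fun x => ?_, fun x => ?_⟩
  · exact abs_le.2 ⟨le_infConvDist hf_ge x, (infConvDist_le hf_ge x).trans (abs_le.1 (hf_bd x)).2⟩
  · exact abs_le.2 ⟨by linarith [infConvDist_le (K := K) hf_ge x], by linarith [hK x]⟩

end InfConvolution

section BoundedLipschitz

variable {X : Type*} [MetricSpace X] [MeasurableSpace X] {μ ν : Measure X}
  [IsFiniteMeasure μ] [IsFiniteMeasure ν] {g : X → ℝ}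

lemma integral_sub_integral_le_blDist (hg_bd : ∀ x, |g x| ≤ 1) (hg_lip : LipschitzWith 1 g) :
    ∫ x, g x ∂μ - ∫ x, g x ∂ν ≤ blDist μ ν := by
  refine le_ciSup (f := fun ψ : {ψ : X → ℝ // (∀ x, |ψ x| ≤ 1) ∧ LipschitzWith 1 ψ} =>
    ∫ x, ψ.1 x ∂μ - ∫ x, ψ.1 x ∂ν) ⟨μ.real univ + ν.real univ, ?_⟩ ⟨g, hg_bd, hg_lip⟩
  rintro _ ⟨⟨ψ, hψ_bd, -⟩, rfl⟩
  have hμ := norm_integral_le_of_norm_le_const (μ := μ) (f := ψ)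
    (ae_of_all _ fun x => (hψ_bd x).trans_eq' (Real.norm_eq_abs _))
  have hν := norm_integral_le_of_norm_le_const (μ := ν) (f := ψ)
    (ae_of_all _ fun x => (hψ_bd x).trans_eq' (Real.norm_eq_abs _))
  simp only [Real.norm_eq_abs, one_mul] at hμ hν
  linarith [(abs_le.1 hμ).2, (abs_le.1 hν).1]

lemma abs_integral_sub_integral_le_blDist (hg_bd : ∀ x, |g x| ≤ 1) (hg_lip : LipschitzWith 1 g) :
    |∫ x, g x ∂μ - ∫ x, g x ∂ν| ≤ blDist μ ν := by
  have hneg := integral_sub_integral_le_blDist (μ := μ) (ν := ν) (g := -g)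
    (fun x => by simpa using hg_bd x) hg_lip.neg
  simp only [Pi.neg_apply, integral_neg] at hneg
  exact abs_le.2 ⟨by linarith, integral_sub_integral_le_blDist hg_bd hg_lip⟩

lemma abs_integral_sub_integral_le_mul_blDist {C : ℝ} (hC : 0 < C) {K : ℝ≥0} (hKC : K ≤ C)
    (hg_bd : ∀ x, |g x| ≤ C) (hg_lip : LipschitzWith K g) :
    |∫ x, g x ∂μ - ∫ x, g x ∂ν| ≤ C * blDist μ ν := by
  have hscaled_bd : ∀ x, |g x / C| ≤ 1 := fun x => by
    rw [abs_div, abs_of_pos hC, div_le_one hC]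
    exact hg_bd x
  have hscaled_lip : LipschitzWith 1 fun x => g x / C := by
    refine lipschitzWith_iff_dist_le_mul.2 fun x y => ?_
    rw [Real.dist_eq, ← sub_div, abs_div, abs_of_pos hC, div_le_iff₀ hC, NNReal.coe_one, one_mul]
    calc |g x - g y| = dist (g x) (g y) := (Real.dist_eq _ _).symm
      _ ≤ K * dist x y := hg_lip.dist_le_mul x y
      _ ≤ dist x y * C := by rw [mul_comm]; exact mul_le_mul_of_nonneg_left hKC dist_nonneg
  have := abs_integral_sub_integral_le_blDist (μ := μ) (ν := ν) hscaled_bd hscaled_lip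
  rwa [integral_div, integral_div, ← sub_div, abs_div, abs_of_pos hC, div_le_iff₀' hC] at this

end BoundedLipschitz

lemma Continuous.integrable_of_abs_le_s18 {X : Type*} [TopologicalSpace X]
    [TopologicalSpace.PseudoMetrizableSpace X] [MeasurableSpace X] [OpensMeasurableSpace X]
    {μ : Measure X} [IsFiniteMeasure μ] {h : X → ℝ} (hh : Continuous h) {M : ℝ} (hh_bd : ∀ x, |h x| ≤ M) : Integrable h μ :=
  .of_bound hh.aestronglyMeasurable M
    (ae_of_all _ fun x => (hh_bd x).trans_eq' (Real.norm_eq_abs _))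

lemma abs_integral_sub_integral_le_of_abs_sub_le {Ω : Type*} [MeasurableSpace Ω] {μ : Measure Ω}
    [IsProbabilityMeasure μ] {f g : Ω → ℝ} {ε : ℝ} (hf : Integrable f μ) (hg : Integrable g μ)
    (hfg : ∀ x, |f x - g x| ≤ ε) :
    |∫ x, f x ∂μ - ∫ x, g x ∂μ| ≤ ε := by
  rw [← integral_sub hf hg]
  simpa using norm_integral_le_of_norm_le_const (μ := μ) (f := fun x => f x - g x)
    (ae_of_all _ fun x => (hfg x).trans_eq' (Real.norm_eq_abs _))

/-- the bounded-Lipschitz norm uniformity on tight probability measures is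
finer than the `Ub(X)`-weak uniformity: for every bounded uniformly continuous `f`, the map
`μ ↦ ∫ f dμ` is uniformly continuous for the bounded-Lipschitz metric. -/
theorem blDist_finer_than_ubWeak
    {X : Type*} [MetricSpace X] [MeasurableSpace X] [BorelSpace X]
    (f : X → ℝ) (hf_uc : UniformContinuous f) (M : ℝ) (hf_bd : ∀ x, |f x| ≤ M) :
    ∀ ε : ℝ, 0 < ε → ∃ δ : ℝ, 0 < δ ∧
      ∀ μ ν : Measure X, IsProbabilityMeasure μ → IsProbabilityMeasure ν →
        μ.InnerRegular → ν.InnerRegular →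
        blDist μ ν < δ → |(∫ x, f x ∂μ) - ∫ x, f x ∂ν| < ε := by
  intro ε hε
  obtain ⟨K, g, hg_lip, hg_bd, hfg⟩ := exists_lipschitzWith_abs_sub_le hf_uc hf_bd (ε := ε / 3)
    (by positivity)
  set C : ℝ := max (K : ℝ) M + 1
  have hC : 0 < C := by positivity
  refine ⟨ε / (3 * C), by positivity, fun μ ν _ _ _ _ hbl => ?_⟩
  have hμ := abs_integral_sub_integral_le_of_abs_sub_le (μ := μ)
    (hf_uc.continuous.integrable_of_abs_le_s18 hf_bd) (hg_lip.continuous.integrable_of_abs_le_s18 hg_bd) hfg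
  have hν := abs_integral_sub_integral_le_of_abs_sub_le (μ := ν)
    (hf_uc.continuous.integrable_of_abs_le_s18 hf_bd) (hg_lip.continuous.integrable_of_abs_le_s18 hg_bd) hfg
  have hg : |∫ x, g x ∂μ - ∫ x, g x ∂ν| < ε / 3 :=
    calc |∫ x, g x ∂μ - ∫ x, g x ∂ν| ≤ C * blDist μ ν :=
          abs_integral_sub_integral_le_mul_blDist hC (by linarith [le_max_left (K : ℝ) M])
            (fun x => by linarith [hg_bd x, le_max_right (K : ℝ) M]) hg_lip
      _ < C * (ε / (3 * C)) := mul_lt_mul_of_pos_left hbl hC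
      _ = ε / 3 := by field_simp
  calc |∫ x, f x ∂μ - ∫ x, f x ∂ν|
      ≤ |∫ x, f x ∂μ - ∫ x, g x ∂μ| + |∫ x, g x ∂μ - ∫ x, g x ∂ν|
        + |∫ x, g x ∂ν - ∫ x, f x ∂ν| := by
        simpa only [Real.dist_eq] using dist_triangle4 (∫ x, f x ∂μ) (∫ x, g x ∂μ)
          (∫ x, g x ∂ν) (∫ x, f x ∂ν)
    _ < ε := by linarith [abs_sub_comm (∫ x, g x ∂ν) (∫ x, f x ∂ν)]
end
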